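/- Let p be a prime, G = SL_2(F_p), L the subspace of strictly upper-triangular matrices in M_2(F_p), and B the upper-triangular Borel subgroup of G. For any x in M_2(F_p), the number of cosets gB in G/B such that x ∈ g L g^{-1} equals p+1 if x = 0, equals 1 if x ≠ 0 and tr(x) = 0 and det(x) = 0, and equals 0 otherwise. -/

import Mathlib

/-!
Since `B` is the stabiliser of the line `[e₀]` and `SL₂` acts transitively on `ℙ¹(𝔽_p)`, the map
`gB ↦ g • [e₀]` identifies `G/B` with `ℙ¹(𝔽_p)`. Conjugation preserves the trace, so `g⁻¹ x g` is
strictly upper triangular iff `tr x = 0` and `x (g e₀) = 0`. Hence for `tr x = 0` the cosets counted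
are the lines contained in `ker x`: all `p + 1` of them if `x = 0`, only `ker x` itself if `x ≠ 0`
and `det x = 0`, and none if `x` is invertible.
-/

open Matrix

/-- The upper-triangular Borel subgroup `B` of `SL₂(𝔽_p)`. -/
def upperTriangularSL (p : ℕ) [Fact p.Prime] :
    Subgroup (Matrix.SpecialLinearGroup (Fin 2) (ZMod p)) where
  carrier := {g | (g : Matrix (Fin 2) (Fin 2) (ZMod p)) 1 0 = 0}
  one_mem' := by simp
  mul_mem' := by
    intro a b ha hb
    simp only [Set.mem_setOf_eq] at *
    show ((a * b : Matrix.SpecialLinearGroup (Fin 2) (ZMod p)) :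
        Matrix (Fin 2) (Fin 2) (ZMod p)) 1 0 = 0
    rw [Matrix.SpecialLinearGroup.coe_mul, Matrix.mul_apply]
    simp [Fin.sum_univ_two, ha, hb]
  inv_mem' := by
    intro a ha
    simp only [Set.mem_setOf_eq] at *
    rw [Matrix.SpecialLinearGroup.SL2_inv_expl]
    simp [ha]

open scoped LinearAlgebra.Projectivization MatrixGroups

namespace Projectivization

variable {k V : Type*} [Field k] [AddCommGroup V] [Module k V]

theorem card_submodule_le_of_finrank_eq_one {K : Submodule k V} (hK : Module.finrank k K = 1) :
    Nat.card {ℓ : ℙ k V // ℓ.submodule ≤ K} = 1 := by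
  have : FiniteDimensional k K := Module.finite_of_finrank_eq_succ hK
  have eq_K {ℓ : ℙ k V} (hℓ : ℓ.submodule ≤ K) : ℓ.submodule = K :=
    Submodule.eq_of_le_of_finrank_eq hℓ (by rw [finrank_submodule, hK])
  rw [Nat.card_eq_one_iff_unique]
  refine ⟨⟨fun ℓ ℓ' => Subtype.ext (submodule_injective ((eq_K ℓ.2).trans (eq_K ℓ'.2).symm))⟩, ?_⟩
  obtain ⟨v, hvK, hv⟩ := Submodule.exists_mem_ne_zero_of_ne_bot
    (Submodule.one_le_finrank_iff.mp hK.ge)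
  exact ⟨⟨mk k v hv, by rwa [submodule_mk, Submodule.span_singleton_le_iff_mem]⟩⟩

end Projectivization

namespace Matrix

variable {F : Type*} [Field F]

theorem ker_toLin'_ne_bot_iff {n : Type*} [Fintype n] [DecidableEq n] (x : Matrix n n F) :
    LinearMap.ker x.toLin' ≠ ⊥ ↔ x.det = 0 := by
  rw [Submodule.ne_bot_iff, ← exists_mulVec_eq_zero_iff]
  simp only [LinearMap.mem_ker, toLin'_apply]
  tauto

theorem finrank_ker_toLin'_eq_one {x : Matrix (Fin 2) (Fin 2) F} (hx : x ≠ 0) (hdet : x.det = 0) :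
    Module.finrank F (LinearMap.ker x.toLin') = 1 := by
  have h_ne_top : LinearMap.ker x.toLin' ≠ ⊤ := by
    rwa [Ne, LinearMap.ker_eq_top, ← map_zero toLin', toLin'.injective.eq_iff]
  have hpos := Submodule.one_le_finrank_iff.mpr ((ker_toLin'_ne_bot_iff x).mpr hdet)
  have hlt := Submodule.finrank_lt h_ne_top
  rw [Module.finrank_fin_fun] at hlt
  omega

theorem card_submodule_le_ker_toLin' [DecidableEq F] [Finite F] (x : Matrix (Fin 2) (Fin 2) F) :
    Nat.card {ℓ : ℙ F (Fin 2 → F) // ℓ.submodule ≤ LinearMap.ker x.toLin'} =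
      if x = 0 then Nat.card F + 1 else if x.det = 0 then 1 else 0 := by
  split_ifs with hx hdet
  · subst hx
    simp only [map_zero, LinearMap.ker_zero, le_top]
    rw [Nat.card_congr (Equiv.subtypeUnivEquiv fun _ => trivial),
      Projectivization.card_of_finrank_two _ _ (Module.finrank_fin_fun F)]
  · exact Projectivization.card_submodule_le_of_finrank_eq_one (finrank_ker_toLin'_eq_one hx hdet)
  · have h_bot : LinearMap.ker x.toLin' = ⊥ := not_ne_iff.mp (mt (ker_toLin'_ne_bot_iff x).mp hdet)
    simp [h_bot, Projectivization.submodule_eq, Projectivization.rep_nonzero]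

end Matrix

namespace Matrix.SpecialLinearGroup

variable {R : Type*} [CommRing R]

theorem exists_strictUpper_conj_eq_iff (g : SL(2, R)) (x : Matrix (Fin 2) (Fin 2) R) :
    (∃ l : Matrix (Fin 2) (Fin 2) R, l 0 0 = 0 ∧ l 1 0 = 0 ∧ l 1 1 = 0 ∧
        x = (g : Matrix (Fin 2) (Fin 2) R) * l * ((g⁻¹ : SL(2, R)) : Matrix (Fin 2) (Fin 2) R)) ↔
      x.trace = 0 ∧ x *ᵥ (g • Pi.single 0 1) = 0 := by
  set G : Matrix (Fin 2) (Fin 2) R := ↑g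
  set G' : Matrix (Fin 2) (Fin 2) R := ↑(g⁻¹ : SL(2, R))
  have hGG' : G * G' = 1 := by simp only [G, G', ← coe_mul, mul_inv_cancel, coe_one]
  have hG'G : G' * G = 1 := by simp only [G, G', ← coe_mul, inv_mul_cancel, coe_one]
  set y := G' * x * G
  have hconj (l : Matrix (Fin 2) (Fin 2) R) : x = G * l * G' ↔ l = y := by
    constructor <;> rintro rfl
    · simp only [y, ← Matrix.mul_assoc, hG'G, Matrix.one_mul]
      simp [Matrix.mul_assoc, hG'G]
    · simp only [y, ← Matrix.mul_assoc, hGG', Matrix.one_mul]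
      simp [Matrix.mul_assoc, hGG']
  have htr : x.trace = y 0 0 + y 1 1 := by
    rw [← trace_fin_two, trace_mul_cycle, hGG', Matrix.one_mul]
  have hcol : x *ᵥ (g • Pi.single 0 1) = 0 ↔ y 0 0 = 0 ∧ y 1 0 = 0 := by
    have hy : y.col 0 = G' *ᵥ (x *ᵥ (g • Pi.single 0 1)) := by
      rw [← mulVec_single_one, SpecialLinearGroup.smul_def, smul_eq_mulVec, mulVec_mulVec,
        mulVec_mulVec]
    have hG'_inj (v : Fin 2 → R) : G' *ᵥ v = 0 ↔ v = 0 :=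
      ⟨fun h => by
        simpa only [mulVec_mulVec, hGG', one_mulVec, mulVec_zero] using congrArg (G *ᵥ ·) h,
        by rintro rfl; exact mulVec_zero G'⟩
    rw [← hG'_inj, ← hy, funext_iff, Fin.forall_fin_two]
    rfl
  rw [htr, hcol]
  constructor
  · rintro ⟨l, h00, h10, h11, hx⟩
    obtain rfl := (hconj l).mp hx
    simp [h00, h10, h11]
  · rintro ⟨hsum, h00, h10⟩
    exact ⟨y, h00, h10, by simpa [h00] using hsum, (hconj y).mpr rfl⟩

end Matrix.SpecialLinearGroup

section BorelQuotient

variable {p : ℕ} [Fact p.Prime]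

variable (F : Type*) [Field F] in
def firstCoordinateLine : ℙ F (Fin 2 → F) := Projectivization.mk F (Pi.single 0 1) (by simp)

theorem stabilizer_firstCoordinateLine :
    MulAction.stabilizer SL(2, ZMod p) (firstCoordinateLine (ZMod p)) = upperTriangularSL p := by
  ext g
  have hcol : g • (Pi.single 0 1 : Fin 2 → ZMod p) = (g : Matrix (Fin 2) (Fin 2) (ZMod p)).col 0 :=
    mulVec_single_one _ _
  rw [MulAction.mem_stabilizer_iff, firstCoordinateLine, Projectivization.smul_mk,
    Projectivization.mk_eq_mk_iff', hcol]
  change _ ↔ (g : Matrix (Fin 2) (Fin 2) (ZMod p)) 1 0 = 0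
  constructor
  · rintro ⟨a, ha⟩
    simpa using (congrFun ha 1).symm
  · intro h
    exact ⟨(g : Matrix (Fin 2) (Fin 2) (ZMod p)) 0 0, by ext i; fin_cases i <;> simp [h]⟩

theorem card_subtype_quotient_upperTriangularSL {P : SL(2, ZMod p) → Prop}
    {Q : ℙ (ZMod p) (Fin 2 → ZMod p) → Prop}
    (hPQ : ∀ g, P g ↔ Q (g • firstCoordinateLine (ZMod p))) :
    Nat.card {q : SL(2, ZMod p) ⧸ upperTriangularSL p // ∃ g, QuotientGroup.mk g = q ∧ P g} =
      Nat.card {ℓ // Q ℓ} := by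
  let e : SL(2, ZMod p) ⧸ upperTriangularSL p ≃ ℙ (ZMod p) (Fin 2 → ZMod p) :=
    (Subgroup.quotientEquivOfEq stabilizer_firstCoordinateLine.symm).trans <|
      (MulAction.orbitEquivQuotientStabilizer _ _).symm.trans <|
        Equiv.subtypeUnivEquiv fun ℓ => MulAction.exists_smul_eq _ _ ℓ
  have he (g : SL(2, ZMod p)) : e g = g • firstCoordinateLine (ZMod p) := rfl
  refine Nat.card_congr (e.subtypeEquiv fun q => ?_)
  induction q using QuotientGroup.induction_on with | H g => ?_
  rw [he]
  constructor
  · rintro ⟨g', hg', hP⟩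
    rwa [← he, ← hg', he, ← hPQ]
  · exact fun hQ => ⟨g, rfl, (hPQ g).mpr hQ⟩

end BorelQuotient

/-- The linear algebra lemma (§5.1): for `x ∈ M₂(𝔽_p)`, the number of cosets `gB ∈ G/B`
with `x ∈ g L g⁻¹` (where `L` is the strictly upper-triangular subspace) is `p+1` if `x = 0`,
`1` if `x ≠ 0` and `tr x = det x = 0`, and `0` otherwise. -/
theorem linear_algebra_lemma (p : ℕ) [Fact p.Prime] (x : Matrix (Fin 2) (Fin 2) (ZMod p)) :
    Nat.card {q : Matrix.SpecialLinearGroup (Fin 2) (ZMod p) ⧸ upperTriangularSL p //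
      ∃ g : Matrix.SpecialLinearGroup (Fin 2) (ZMod p),
        QuotientGroup.mk g = q ∧
        ∃ l : Matrix (Fin 2) (Fin 2) (ZMod p),
          l 0 0 = 0 ∧ l 1 0 = 0 ∧ l 1 1 = 0 ∧
          x = (g : Matrix (Fin 2) (Fin 2) (ZMod p)) * l *
              ((g⁻¹ : Matrix.SpecialLinearGroup (Fin 2) (ZMod p)) :
                Matrix (Fin 2) (Fin 2) (ZMod p))} =
    if x = 0 then p + 1
    else if x ≠ 0 ∧ x.trace = 0 ∧ x.det = 0 then 1
    else 0 := by
  calc _ = Nat.card {ℓ : ℙ (ZMod p) (Fin 2 → ZMod p) //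
          x.trace = 0 ∧ ℓ.submodule ≤ LinearMap.ker x.toLin'} :=
        card_subtype_quotient_upperTriangularSL fun g => by
          rw [SpecialLinearGroup.exists_strictUpper_conj_eq_iff, firstCoordinateLine,
            Projectivization.smul_mk, Projectivization.submodule_mk,
            Submodule.span_singleton_le_iff_mem, LinearMap.mem_ker, toLin'_apply]
    _ = _ := by
      by_cases htr : x.trace = 0
      · simp only [htr, true_and]
        rw [card_submodule_le_ker_toLin', Nat.card_zmod]
        by_cases hx : x = 0 <;> simp [hx]
      · have hx : x ≠ 0 := by rintro rfl; exact htr (trace_zero _ _)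
        simp [htr, hx]
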